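/- Let P be a projective right R-module and K a small submodule of P. Then the module M = P/K is dual automorphism-invariant if and only if σ(K) = K for every automorphism σ of P. -/
import Mathlib


open LinearMap Submodule

/-- A submodule N of M is small (superfluous) in M:
N + K = M implies K = M for every submodule K. -/
def IsSmall {R : Type*} [Ring R] {M : Type*} [AddCommGroup M] [Module R M]
    (N : Submodule R M) : Prop :=
  ∀ K : Submodule R M, N ⊔ K = ⊤ → K = ⊤

section Small

variable {R : Type*} [Ring R] {M : Type*} [AddCommGroup M] [Module R M]
variable {N : Type*} [AddCommGroup N] [Module R N]

theorem isSmall_bot : IsSmall (⊥ : Submodule R M) := by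
  intro C hC
  simpa using hC

theorem IsSmall.mono {A B : Submodule R M} (hB : IsSmall B) (hAB : A ≤ B) : IsSmall A := by
  intro C hC
  apply hB
  rw [eq_top_iff, ← hC]
  exact sup_le_sup_right hAB C

theorem IsSmall.sup {A B : Submodule R M} (hA : IsSmall A) (hB : IsSmall B) :
    IsSmall (A ⊔ B) := by
  intro C hC
  apply hB
  apply hA
  rwa [← sup_assoc]

theorem IsSmall.map {S : Submodule R M} (hS : IsSmall S) (f : M →ₗ[R] N)
    (hf : Function.Surjective f) : IsSmall (S.map f) := by
  intro C hC
  have h1 : S ⊔ C.comap f = ⊤ := by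
    rw [eq_top_iff]
    intro x _
    have hx : f x ∈ S.map f ⊔ C := by rw [hC]; trivial
    rcases Submodule.mem_sup.1 hx with ⟨a, ha, c, hc, hac⟩
    rcases ha with ⟨s, hs, rfl⟩
    refine Submodule.mem_sup.2 ⟨s, hs, x - s, ?_, by abel⟩
    have : f (x - s) = c := by rw [map_sub, ← hac]; abel
    simpa [Submodule.mem_comap, this] using hc
  have h2 := hS _ h1
  rw [eq_top_iff]
  intro y _
  obtain ⟨x, rfl⟩ := hf y
  have hx : x ∈ C.comap f := by rw [h2]; trivial
  exact hx

theorem IsSmall.comap {S : Submodule R N} (hS : IsSmall S) (f : M →ₗ[R] N)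
    (hf : Function.Surjective f) (hker : IsSmall (LinearMap.ker f)) :
    IsSmall (S.comap f) := by
  intro C hC
  have h1 : S ⊔ C.map f = ⊤ := by
    rw [eq_top_iff]
    intro y _
    obtain ⟨x, rfl⟩ := hf y
    have hx : x ∈ S.comap f ⊔ C := by rw [hC]; trivial
    rcases Submodule.mem_sup.1 hx with ⟨a, ha, c, hc, rfl⟩
    exact Submodule.mem_sup.2 ⟨f a, ha, f c, ⟨c, hc, rfl⟩, (map_add f a c).symm⟩
  have h2 := hS _ h1
  apply hker
  rw [eq_top_iff]
  intro x _
  have hx : f x ∈ C.map f := by rw [h2]; trivial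
  rcases hx with ⟨c, hc, hfc⟩
  refine Submodule.mem_sup.2 ⟨x - c, ?_, c, hc, by abel⟩
  simp [LinearMap.mem_ker, map_sub, hfc]

end Small

section Proj

variable {R : Type*} [Ring R] {P : Type*} [AddCommGroup P] [Module R P]

theorem bij_of_surj_of_small_ker (hP : Module.Projective R P) (f : P →ₗ[R] P)
    (hs : Function.Surjective f) (hk : IsSmall (LinearMap.ker f)) :
    Function.Bijective f := by
  haveI := hP
  obtain ⟨s, hsec⟩ := Module.projective_lifting_property f LinearMap.id hs
  have hseq : ∀ x, f (s x) = x := fun x => by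
    have := congrArg (fun g : P →ₗ[R] P => g x) hsec
    simpa using this
  have hsup : LinearMap.ker f ⊔ LinearMap.range s = ⊤ := by
    rw [eq_top_iff]
    intro x _
    refine Submodule.mem_sup.2 ⟨x - s (f x), ?_, s (f x), ⟨f x, rfl⟩, by abel⟩
    simp [LinearMap.mem_ker, map_sub, hseq]
  have hrange : LinearMap.range s = ⊤ := hk _ hsup
  refine ⟨?_, hs⟩
  have hinj : ∀ x, f x = 0 → x = 0 := by
    intro x hx
    obtain ⟨y, rfl⟩ := LinearMap.range_eq_top.1 hrange x
    rw [hseq] at hx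
    rw [hx, map_zero]
  intro a b hab
  have : f (a - b) = 0 := by rw [map_sub, hab, sub_self]
  exact sub_eq_zero.1 (hinj _ this)

end Proj

section Proj2

variable {R : Type*} [Ring R] {P : Type*} [AddCommGroup P] [Module R P]

theorem bij_of_near_id (hP : Module.Projective R P) (f : P →ₗ[R] P)
    {S : Submodule R P} (hS : IsSmall S) (h : ∀ x, x - f x ∈ S) :
    Function.Bijective f := by
  have hsurj : Function.Surjective f := by
    have htop : S ⊔ LinearMap.range f = ⊤ := by
      rw [eq_top_iff]
      intro x _
      exact Submodule.mem_sup.2 ⟨x - f x, h x, f x, ⟨x, rfl⟩, by abel⟩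
    exact LinearMap.range_eq_top.1 (hS _ htop)
  have hker : IsSmall (LinearMap.ker f) := by
    refine hS.mono ?_
    intro x hx
    have hx0 : f x = 0 := hx
    have := h x
    rwa [hx0, sub_zero] at this
  exact bij_of_surj_of_small_ker hP f hsurj hker

end Proj2

/-- M is a dual automorphism-invariant R-module: for any two small submodules
K₁, K₂ of M, every surjective homomorphism η : M/K₁ → M/K₂ whose kernel is
small in M/K₁ lifts to an endomorphism φ of M (i.e. π₂ ∘ φ = η ∘ π₁). -/
def IsDualAutoInv (R M : Type*) [Ring R] [AddCommGroup M] [Module R M] : Prop :=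
  ∀ (K₁ K₂ : Submodule R M), IsSmall K₁ → IsSmall K₂ →
    ∀ η : (M ⧸ K₁) →ₗ[R] (M ⧸ K₂), Function.Surjective η →
      IsSmall (LinearMap.ker η) →
      ∃ φ : M →ₗ[R] M, K₂.mkQ ∘ₗ φ = η ∘ₗ K₁.mkQ

section Fact

variable {R P : Type*} [Ring R] [AddCommGroup P] [Module R P]

/-- Key consequence of dual automorphism-invariance: every automorphism `b` of `P`
agrees modulo `K ⊔ b K` with an endomorphism `g` preserving `K`. -/
theorem fact_lemma (hP : Module.Projective R P) (K : Submodule R P) (hK : IsSmall K)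
    (hdai : IsDualAutoInv R (P ⧸ K)) (b : P ≃ₗ[R] P) :
    ∃ g : P →ₗ[R] P, K.map g ≤ K ∧
      ∀ x : P, (b : P →ₗ[R] P) x - g x ∈ K ⊔ K.map (b : P →ₗ[R] P) := by
  haveI := hP
  set bl := (b : P →ₗ[R] P) with hbl
  set bsl := (b.symm : P →ₗ[R] P) with hbsl
  set L₂ := K ⊔ K.map bl with hL₂def
  set L₁ := K ⊔ K.map bsl with hL₁def
  have hL₂ : IsSmall L₂ := hK.sup (hK.map bl b.surjective)
  have hL₁ : IsSmall L₁ := hK.sup (hK.map bsl b.symm.surjective)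
  set K₁ := L₁.map K.mkQ with hK₁def
  set K₂ := L₂.map K.mkQ with hK₂def
  have hK₁ : IsSmall K₁ := hL₁.map K.mkQ (Submodule.mkQ_surjective K)
  have hK₂ : IsSmall K₂ := hL₂.map K.mkQ (Submodule.mkQ_surjective K)
  set q₁ : P →ₗ[R] ((P ⧸ K) ⧸ K₁) := K₁.mkQ ∘ₗ K.mkQ with hq₁def
  set q₂ : P →ₗ[R] ((P ⧸ K) ⧸ K₂) := K₂.mkQ ∘ₗ K.mkQ with hq₂def
  have hq₁s : Function.Surjective q₁ :=
    (Submodule.mkQ_surjective K₁).comp (Submodule.mkQ_surjective K)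
  have hq₂s : Function.Surjective q₂ :=
    (Submodule.mkQ_surjective K₂).comp (Submodule.mkQ_surjective K)
  have hq₁ker : LinearMap.ker q₁ = L₁ := by
    rw [hq₁def, LinearMap.ker_comp, Submodule.ker_mkQ, hK₁def, Submodule.comap_map_eq,
      Submodule.ker_mkQ, sup_eq_left]
    exact le_sup_left
  have hq₂ker : LinearMap.ker q₂ = L₂ := by
    rw [hq₂def, LinearMap.ker_comp, Submodule.ker_mkQ, hK₂def, Submodule.comap_map_eq,
      Submodule.ker_mkQ, sup_eq_left]
    exact le_sup_left
  have hbL₁ : ∀ x ∈ L₁, bl x ∈ L₂ := by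
    intro x hx
    rcases Submodule.mem_sup.1 hx with ⟨k, hk, y, hy, rfl⟩
    rcases hy with ⟨k', hk', rfl⟩
    rw [map_add]
    apply Submodule.add_mem
    · exact Submodule.mem_sup_right ⟨k, hk, rfl⟩
    · have : bl (bsl k') = k' := b.apply_symm_apply k'
      rw [this]
      exact Submodule.mem_sup_left hk'
  have hKA : K ≤ LinearMap.ker (q₂ ∘ₗ bl) := by
    intro k hk
    have : bl k ∈ L₂ := Submodule.mem_sup_right ⟨k, hk, rfl⟩
    simpa [LinearMap.mem_ker, ← hq₂ker, LinearMap.mem_ker] using (hq₂ker ▸ this : bl k ∈ LinearMap.ker q₂)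
  set ψ : (P ⧸ K) →ₗ[R] ((P ⧸ K) ⧸ K₂) := K.liftQ (q₂ ∘ₗ bl) hKA with hψdef
  have hK₁ψ : K₁ ≤ LinearMap.ker ψ := by
    rintro _ ⟨x, hx, rfl⟩
    have hblx : bl x ∈ LinearMap.ker q₂ := hq₂ker ▸ hbL₁ x hx
    show ψ (K.mkQ x) = 0
    rw [hψdef]
    simpa [Submodule.liftQ_apply] using hblx
  set η : ((P ⧸ K) ⧸ K₁) →ₗ[R] ((P ⧸ K) ⧸ K₂) := K₁.liftQ ψ hK₁ψ with hηdef
  have hηq : ∀ x : P, η (q₁ x) = q₂ (bl x) := by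
    intro x
    rfl
  have hηsurj : Function.Surjective η := by
    intro y
    obtain ⟨z, rfl⟩ := hq₂s y
    obtain ⟨x, rfl⟩ := b.surjective z
    exact ⟨q₁ x, hηq x⟩
  have hηker : LinearMap.ker η = ⊥ := by
    rw [eq_bot_iff]
    intro m hm
    obtain ⟨x, rfl⟩ := hq₁s m
    have h0 : q₂ (bl x) = 0 := by rw [← hηq x]; exact hm
    have hxL₂ : bl x ∈ L₂ := hq₂ker ▸ h0
    have hxL₁ : x ∈ L₁ := by
      rcases Submodule.mem_sup.1 hxL₂ with ⟨k, hk, y, hy, heq⟩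
      rcases hy with ⟨k', hk', rfl⟩
      have : x = bsl k + k' := by
        apply b.injective
        show bl x = bl (bsl k + k')
        rw [map_add]
        have h1 : bl (bsl k) = k := b.apply_symm_apply k
        rw [h1, ← heq]
      rw [this]
      apply Submodule.add_mem
      · exact Submodule.mem_sup_right ⟨k, hk, rfl⟩
      · exact Submodule.mem_sup_left hk'
    have : x ∈ LinearMap.ker q₁ := hq₁ker ▸ hxL₁
    exact this
  obtain ⟨φ, hφ⟩ := hdai K₁ K₂ hK₁ hK₂ η hηsurj (by rw [hηker]; exact isSmall_bot)
  obtain ⟨g, hg⟩ := Module.projective_lifting_property K.mkQ (φ ∘ₗ K.mkQ)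
    (Submodule.mkQ_surjective K)
  have hgpt : ∀ x : P, K.mkQ (g x) = φ (K.mkQ x) := by
    intro x
    have := congrArg (fun m : P →ₗ[R] (P ⧸ K) => m x) hg
    simpa using this
  have hφpt : ∀ m : P ⧸ K, K₂.mkQ (φ m) = η (K₁.mkQ m) := by
    intro m
    have := congrArg (fun m' : (P ⧸ K) →ₗ[R] ((P ⧸ K) ⧸ K₂) => m' m) hφ
    simpa using this
  refine ⟨g, ?_, ?_⟩
  · rintro _ ⟨k, hk, rfl⟩
    have h0 : K.mkQ k = 0 := (Submodule.Quotient.mk_eq_zero K).2 hk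
    have : K.mkQ (g k) = 0 := by rw [hgpt, h0, map_zero]
    exact (Submodule.Quotient.mk_eq_zero K).1 this
  · intro x
    have h1 : q₂ (g x) = q₂ (bl x) := by
      show K₂.mkQ (K.mkQ (g x)) = q₂ (bl x)
      rw [hgpt, hφpt, ← hηq x]
      rfl
    have : bl x - g x ∈ LinearMap.ker q₂ := by
      simp [LinearMap.mem_ker, map_sub, h1]
    rwa [hq₂ker] at this

end Fact

section Main

variable {R P : Type*} [Ring R] [AddCommGroup P] [Module R P]

theorem gem_lemma (hP : Module.Projective R P) (K : Submodule R P) (hK : IsSmall K)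
    (hdai : IsDualAutoInv R (P ⧸ K)) (τ : P ≃ₗ[R] P)
    (hτ : K.map (τ : P →ₗ[R] P) ≤ K) : K ≤ K.map (τ : P →ₗ[R] P) := by
  obtain ⟨g', hg'K, hg'⟩ := fact_lemma hP K hK hdai τ.symm
  set e : P →ₗ[R] P := (τ : P →ₗ[R] P) ∘ₗ g' with hedef
  have he : ∀ x, x - e x ∈ K := by
    intro x
    have h1 := hg' x
    have h2 : x - e x = τ ((τ.symm : P →ₗ[R] P) x - g' x) := by
      rw [map_sub]
      have : τ ((τ.symm : P →ₗ[R] P) x) = x := τ.apply_symm_apply x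
      rw [this]
      rfl
    rw [h2]
    rcases Submodule.mem_sup.1 h1 with ⟨k, hk, y, hy, heq⟩
    rcases hy with ⟨k', hk', rfl⟩
    rw [← heq, map_add]
    apply Submodule.add_mem
    · exact hτ ⟨k, hk, rfl⟩
    · have : τ ((τ.symm : P →ₗ[R] P) k') = k' := τ.apply_symm_apply k'
      rw [this]
      exact hk'
  have hebij : Function.Bijective e := bij_of_near_id hP e hK he
  intro k hk
  obtain ⟨x, hx⟩ := hebij.2 k
  have hxK : x ∈ K := by
    have h1 := he x
    rw [hx] at h1
    have : x = (x - k) + k := by abel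
    rw [this]
    exact Submodule.add_mem K h1 hk
  refine ⟨g' x, hg'K ⟨x, hxK, rfl⟩, ?_⟩
  rw [← hx]
  rfl

theorem main_le (hP : Module.Projective R P) (K : Submodule R P) (hK : IsSmall K)
    (hdai : IsDualAutoInv R (P ⧸ K)) (σ : P ≃ₗ[R] P) :
    K ≤ K.map (σ : P →ₗ[R] P) := by
  obtain ⟨g, hgK, hgb⟩ := fact_lemma hP K hK hdai σ
  set sl := (σ : P →ₗ[R] P) with hsldef
  set A := K.map sl with hAdef
  have hA : IsSmall A := hK.map sl σ.surjective
  set L := K ⊔ A with hLdef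
  set t : P →ₗ[R] P := sl - g with htdef
  have ht : ∀ x, t x ∈ L := by
    intro x
    have := hgb x
    simpa [htdef, LinearMap.sub_apply] using this
  -- split t into a K-part and an A-part using projectivity
  haveI := hP
  set W := (↥K) × (↥A) with hWdef
  set addm : W →ₗ[R] P :=
    K.subtype ∘ₗ LinearMap.fst R (↥K) (↥A) + A.subtype ∘ₗ LinearMap.snd R (↥K) (↥A)
    with haddmdef
  have haddmem : ∀ w : W, addm w ∈ L := by
    intro w
    have : addm w = (w.1 : P) + (w.2 : P) := rfl
    rw [this]
    exact Submodule.add_mem L (Submodule.mem_sup_left w.1.2) (Submodule.mem_sup_right w.2.2)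
  set addm' : W →ₗ[R] (↥L) := LinearMap.codRestrict L addm haddmem with haddm'def
  have haddm's : Function.Surjective addm' := by
    rintro ⟨l, hl⟩
    rcases Submodule.mem_sup.1 hl with ⟨a, ha, c, hc, rfl⟩
    refine ⟨(⟨a, ha⟩, ⟨c, hc⟩), ?_⟩
    apply Subtype.ext
    rfl
  set t' : P →ₗ[R] (↥L) := LinearMap.codRestrict L t ht with ht'def
  obtain ⟨th, hth⟩ := Module.projective_lifting_property addm' t' haddm's
  set t₁ : P →ₗ[R] P := K.subtype ∘ₗ LinearMap.fst R (↥K) (↥A) ∘ₗ th with ht₁def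
  set t₂ : P →ₗ[R] P := A.subtype ∘ₗ LinearMap.snd R (↥K) (↥A) ∘ₗ th with ht₂def
  have hsplit : ∀ x, t x = t₁ x + t₂ x := by
    intro x
    have h1 : addm' (th x) = t' x := by
      have := congrArg (fun m : P →ₗ[R] (↥L) => m x) hth
      simpa using this
    have h2 : ((addm' (th x) : ↥L) : P) = t x := by rw [h1]; rfl
    rw [← h2]
    rfl
  have ht₁K : ∀ x, t₁ x ∈ K := fun x => (th x).1.2
  have ht₂A : ∀ x, t₂ x ∈ A := fun x => (th x).2.2
  set β : P →ₗ[R] P := LinearMap.id - t₂ ∘ₗ (σ.symm : P →ₗ[R] P) with hβdef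
  have hβnear : ∀ x, x - β x ∈ A := by
    intro x
    have : x - β x = t₂ ((σ.symm : P →ₗ[R] P) x) := by
      simp [hβdef, LinearMap.sub_apply]
    rw [this]
    exact ht₂A _
  have hβbij : Function.Bijective β := bij_of_near_id hP β hA hβnear
  set βe := LinearEquiv.ofBijective β hβbij with hβedef
  set γe := σ.trans βe with hγedef
  have hγ : ∀ x, (γe : P →ₗ[R] P) x = sl x - t₂ x := by
    intro x
    show β (σ x) = sl x - t₂ x
    have h1 : β (σ x) = σ x - t₂ ((σ.symm : P →ₗ[R] P) (σ x)) := by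
      simp [hβdef, LinearMap.sub_apply]
    have h2 : (σ.symm : P →ₗ[R] P) (σ x) = x := σ.symm_apply_apply x
    rw [h1, h2]
    rfl
  have hγ' : ∀ x, (γe : P →ₗ[R] P) x = g x + t₁ x := by
    intro x
    rw [hγ x]
    have h1 : sl x = g x + t x := by
      rw [htdef]
      simp [LinearMap.sub_apply]
    rw [h1, hsplit x]
    abel
  have hγK : K.map (γe : P →ₗ[R] P) ≤ K := by
    rintro _ ⟨k, hk, rfl⟩
    rw [hγ' k]
    exact Submodule.add_mem K (hgK ⟨k, hk, rfl⟩) (ht₁K k)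
  have hgem := gem_lemma hP K hK hdai γe hγK
  intro k hk
  obtain ⟨k', hk', hk'eq⟩ := hgem hk
  have h1 : k = sl k' - t₂ k' := by rw [← hk'eq, hγ k']
  rw [h1]
  exact Submodule.sub_mem A ⟨k', hk', rfl⟩ (ht₂A k')

end Main

/-- For P projective and K small in P, the module M = P/K is dual
automorphism-invariant iff σ(K) = K for every automorphism σ of P. -/
theorem quotient_dualAutoInv_iff_automorphism_invariant_kernel
    {R P : Type*} [Ring R] [AddCommGroup P] [Module R P]
    (hP : Module.Projective R P) (K : Submodule R P) (hK : IsSmall K) :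
    IsDualAutoInv R (P ⧸ K) ↔
      ∀ σ : P ≃ₗ[R] P, K.map (σ : P →ₗ[R] P) = K := by
  constructor
  · intro hdai σ
    have h1 := main_le hP K hK hdai σ
    have h2 := main_le hP K hK hdai σ.symm
    apply le_antisymm _ h1
    rintro _ ⟨k, hk, rfl⟩
    obtain ⟨k', hk', hkk⟩ := h2 hk
    have : σ k = k' := by
      rw [← hkk]
      exact σ.apply_symm_apply k'
    show (σ : P →ₗ[R] P) k ∈ K
    rw [show (σ : P →ₗ[R] P) k = σ k from rfl, this]
    exact hk'
  · intro hinv K₁ K₂ hK₁ hK₂ η hηs hηk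
    haveI := hP
    set q₁ : P →ₗ[R] ((P ⧸ K) ⧸ K₁) := K₁.mkQ ∘ₗ K.mkQ with hq₁def
    set q₂ : P →ₗ[R] ((P ⧸ K) ⧸ K₂) := K₂.mkQ ∘ₗ K.mkQ with hq₂def
    have hq₁s : Function.Surjective q₁ :=
      (Submodule.mkQ_surjective K₁).comp (Submodule.mkQ_surjective K)
    have hq₂s : Function.Surjective q₂ :=
      (Submodule.mkQ_surjective K₂).comp (Submodule.mkQ_surjective K)
    have hmkQker : IsSmall (LinearMap.ker K.mkQ) := by rwa [Submodule.ker_mkQ]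
    have hq₁ker : IsSmall (LinearMap.ker q₁) := by
      rw [hq₁def, LinearMap.ker_comp, Submodule.ker_mkQ]
      exact hK₁.comap K.mkQ (Submodule.mkQ_surjective K) hmkQker
    have hq₂ker : IsSmall (LinearMap.ker q₂) := by
      rw [hq₂def, LinearMap.ker_comp, Submodule.ker_mkQ]
      exact hK₂.comap K.mkQ (Submodule.mkQ_surjective K) hmkQker
    set ρ : P →ₗ[R] ((P ⧸ K) ⧸ K₂) := η ∘ₗ q₁ with hρdef
    have hρs : Function.Surjective ρ := hηs.comp hq₁s
    have hρker : IsSmall (LinearMap.ker ρ) := by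
      rw [hρdef, LinearMap.ker_comp]
      exact hηk.comap q₁ hq₁s hq₁ker
    obtain ⟨b, hb⟩ := Module.projective_lifting_property q₂ ρ hq₂s
    have hbpt : ∀ x, q₂ (b x) = ρ x := by
      intro x
      have := congrArg (fun m : P →ₗ[R] ((P ⧸ K) ⧸ K₂) => m x) hb
      simpa using this
    have hbs : Function.Surjective b := by
      have htop : LinearMap.ker q₂ ⊔ LinearMap.range b = ⊤ := by
        rw [eq_top_iff]
        intro x _
        obtain ⟨y, hy⟩ := hρs (q₂ x)
        refine Submodule.mem_sup.2 ⟨x - b y, ?_, b y, ⟨y, rfl⟩, by abel⟩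
        simp [LinearMap.mem_ker, map_sub, hbpt, hy]
      exact LinearMap.range_eq_top.1 (hq₂ker _ htop)
    have hbker : IsSmall (LinearMap.ker b) := by
      refine hρker.mono ?_
      intro x hx
      have hx0 : b x = 0 := hx
      show ρ x = 0
      rw [← hbpt, hx0, map_zero]
    have hbbij := bij_of_surj_of_small_ker hP b hbs hbker
    set σ := LinearEquiv.ofBijective b hbbij with hσdef
    have hbK : ∀ k ∈ K, b k ∈ K := by
      intro k hk
      have hcoe : (σ : P →ₗ[R] P) = b := rfl
      have := hinv σ
      rw [hcoe] at this
      rw [← this]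
      exact ⟨k, hk, rfl⟩
    have hker : K ≤ LinearMap.ker (K.mkQ ∘ₗ b) := by
      intro k hk
      show K.mkQ (b k) = 0
      exact (Submodule.Quotient.mk_eq_zero K).2 (hbK k hk)
    refine ⟨K.liftQ (K.mkQ ∘ₗ b) hker, ?_⟩
    apply Submodule.linearMap_qext
    ext x
    show K₂.mkQ ((K.liftQ (K.mkQ ∘ₗ b) hker) (K.mkQ x)) = η (K₁.mkQ (K.mkQ x))
    have h1 : (K.liftQ (K.mkQ ∘ₗ b) hker) (K.mkQ x) = K.mkQ (b x) := rfl
    rw [h1]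
    have h2 : K₂.mkQ (K.mkQ (b x)) = q₂ (b x) := rfl
    rw [h2, hbpt x]
    rfl
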